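/- Assume (G,K,θ) is a multiplicity-free triple. For every spherical function φ, the subspace U_φ = span{λ_G(g)φ : g ∈ G} of L(G) is an irreducible G-subrepresentation, and I(G,K,ψ) decomposes as the orthogonal direct sum I(G,K,ψ) = ⊕_{φ} U_φ over all spherical functions φ; this is the decomposition of I(G,K,ψ) into irreducible subrepresentations. In particular, the number of spherical functions equals the number of pairwise inequivalent irreducible G-representations contained in Ind_K^G θ. -/

import Mathlib

open scoped BigOperators ComplexConjugate Classical

set_option linter.unusedSectionVars false
set_option synthInstance.maxHeartbeats 1000000
set_option maxHeartbeats 1000000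

noncomputable section

namespace MFT

variable {G : Type} [Group G] [Fintype G]
variable {V : Type} [NormedAddCommGroup V] [InnerProductSpace ℂ V] [FiniteDimensional ℂ V]

/-- Left translation of functions on `G`: `(translate h f) g = f (h⁻¹ * g)`.
This is the left regular action of `G`. -/
def translate {A : Type} (h : G) (f : G → A) : G → A := fun g => f (h⁻¹ * g)

/-- A representation by linear automorphisms is unitary if it preserves the inner product. -/
def IsUnitaryRep {H W : Type} [Group H] [NormedAddCommGroup W] [InnerProductSpace ℂ W]
    (ρ : H →* (W ≃ₗ[ℂ] W)) : Prop :=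
  ∀ (h : H) (x y : W), (inner ℂ (ρ h x) (ρ h y) : ℂ) = (inner ℂ x y : ℂ)

/-- Irreducibility of a representation: the space is nonzero and has no proper nonzero
invariant subspace. -/
def IsIrreducibleRep {H W : Type} [Group H] [AddCommGroup W] [Module ℂ W]
    (ρ : H →* (W ≃ₗ[ℂ] W)) : Prop :=
  (⊥ : Submodule ℂ W) ≠ ⊤ ∧
    ∀ p : Submodule ℂ W, (∀ (h : H) (x : W), x ∈ p → ρ h x ∈ p) → p = ⊥ ∨ p = ⊤

variable (K : Subgroup G) (θ : ↥K →* (V ≃ₗ[ℂ] V))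

/-- The space `Ind_K^G V` of the representation induced by `θ`:
functions `f : G → V` with `f (g k) = θ k⁻¹ (f g)`. -/
def ind : Submodule ℂ (G → V) where
  carrier := {f | ∀ (g : G) (k : K), f (g * (k : G)) = θ k⁻¹ (f g)}
  add_mem' := by
    intro f₁ f₂ h₁ h₂ g k
    simp only [Pi.add_apply, h₁ g k, h₂ g k, map_add]
  zero_mem' := by intro g k; simp
  smul_mem' := by
    intro c f hf g k
    simp only [Pi.smul_apply, hf g k, map_smul]

theorem translate_mem_ind {f : G → V} (hf : f ∈ ind K θ) (h : G) : translate h f ∈ ind K θ := by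
  intro g k
  simpa [translate, mul_assoc] using hf (h⁻¹ * g) k

/-- The left regular action of `G` on the induced space, `λ(h) f = f (h⁻¹ ·)`. -/
def lamL (h : G) : ↥(ind K θ) →ₗ[ℂ] ↥(ind K θ) where
  toFun f := ⟨translate h ↑f, translate_mem_ind K θ f.2 h⟩
  map_add' f₁ f₂ := by apply Subtype.ext; funext g; simp [translate]
  map_smul' c f := by apply Subtype.ext; funext g; simp [translate]

instance : AddCommGroup (↥(ind K θ) →ₗ[ℂ] ↥(ind K θ)) := LinearMap.addCommGroup

instance : Module ℂ (↥(ind K θ) →ₗ[ℂ] ↥(ind K θ)) := LinearMap.module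

/-- The Hecke algebra condition: `F (k₁ g k₂) = θ k₂⁻¹ ∘ F g ∘ θ k₁⁻¹`. -/
def IsHecke (F : G → (V →ₗ[ℂ] V)) : Prop :=
  ∀ (g : G) (k₁ k₂ : K),
    F ((k₁ : G) * g * (k₂ : G)) = (θ k₂⁻¹).toLinearMap ∘ₗ F g ∘ₗ (θ k₁⁻¹).toLinearMap

/-- Convolution on the Hecke algebra: `(F₁ * F₂) g = ∑ h, F₁ (h⁻¹ g) ∘ F₂ h`. -/
def heckeConv (F₁ F₂ : G → (V →ₗ[ℂ] V)) : G → (V →ₗ[ℂ] V) :=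
  fun g => ∑ h : G, F₁ (h⁻¹ * g) ∘ₗ F₂ h

/-- Involution on the Hecke algebra: `F* g = (F g⁻¹)*`. -/
def heckeStar (F : G → (V →ₗ[ℂ] V)) : G → (V →ₗ[ℂ] V) :=
  fun g => LinearMap.adjoint (F g⁻¹)

/-- The inner product on the Hecke algebra:
`⟨F₁, F₂⟩ = ∑ g, (dim V)⁻¹ tr (F₂(g)* ∘ F₁(g))`. -/
def heckeInner (F₁ F₂ : G → (V →ₗ[ℂ] V)) : ℂ :=
  ∑ g : G, (Module.finrank ℂ V : ℂ)⁻¹ *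
    LinearMap.trace ℂ V (LinearMap.adjoint (F₂ g) ∘ₗ F₁ g)

/-- `(ξ F) f g = ∑ h, F (h⁻¹ g) (f h)`. -/
def xiFun (F : G → (V →ₗ[ℂ] V)) (f : G → V) : G → V := fun g => ∑ h : G, F (h⁻¹ * g) (f h)

/-- `ξ F` as a linear endomorphism of `G → V`. -/
def xiL (F : G → (V →ₗ[ℂ] V)) : (G → V) →ₗ[ℂ] (G → V) where
  toFun := xiFun F
  map_add' f₁ f₂ := by funext g; simp [xiFun, Finset.sum_add_distrib]
  map_smul' c f := by funext g; simp [xiFun, Finset.smul_sum]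

/-- The paper's inner product on the induced space:
`⟨f₁, f₂⟩ = |K|⁻¹ ∑ g, ⟨f₁ g, f₂ g⟩_V` (conjugate-linear in the second variable). -/
def innerInd (f₁ f₂ : G → V) : ℂ := (Nat.card K : ℂ)⁻¹ * ∑ g : G, (inner ℂ (f₂ g) (f₁ g) : ℂ)

/-- Convolution of complex valued functions on `G`. -/
def convC (f₁ f₂ : G → ℂ) : G → ℂ := fun g => ∑ h : G, f₁ h * f₂ (h⁻¹ * g)

/-- The involution `f* g = conj (f g⁻¹)` on `L(G)`. -/
def starC (f : G → ℂ) : G → ℂ := fun g => conj (f g⁻¹)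

/-- The paper's inner product on `L(G)`: `⟨f₁, f₂⟩ = ∑ g, f₁ g • conj (f₂ g)`. -/
def innerC (f₁ f₂ : G → ℂ) : ℂ := ∑ g : G, f₁ g * conj (f₂ g)

/-- The function `ψ (k) = (d_θ/|K|) ⟨v, θ k v⟩` on `K`, extended by `0` on `G \ K`. -/
def psi (v : V) : G → ℂ := fun g =>
  if h : g ∈ K then ((Module.finrank ℂ V : ℂ) / (Nat.card K : ℂ)) * (inner ℂ (θ ⟨g, h⟩ v) v : ℂ)
  else 0

/-- `(T_v f) g = √(d_θ/|K|) ⟨f g, v⟩`. -/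
def Tv (v : V) (f : G → V) : G → ℂ := fun g =>
  (Real.sqrt ((Module.finrank ℂ V : ℝ) / (Nat.card K : ℝ)) : ℂ) * (inner ℂ v (f g) : ℂ)

/-- The Hecke algebra `H(G,K,ψ) = {f : f = ψ * f * ψ}` as a set. -/
def HSet (v : V) : Set (G → ℂ) := {f | convC (convC (psi K θ v) f) (psi K θ v) = f}

/-- `(S_v F) g = d_θ ⟨F g v, v⟩`. -/
def Sv (v : V) (F : G → (V →ₗ[ℂ] V)) : G → ℂ :=
  fun g => (Module.finrank ℂ V : ℂ) * (inner ℂ v (F g v) : ℂ)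

/-- A spherical function: an element of `H(G,K,ψ)` taking value `1` at the identity which
is an eigenvector of all convolution operators coming from `H(G,K,ψ)`. -/
def IsSpherical (v : V) (φ : G → ℂ) : Prop :=
  φ ∈ HSet K θ v ∧ φ 1 = 1 ∧ ∀ f ∈ HSet K θ v, ∃ c : ℂ, convC φ f = c • φ

/-- The intertwining space `Hom_{K_s}(Res^K_{K_s} θ, θ^s)` where `K_s = K ∩ s K s⁻¹`
and `θ^s (x) = θ (s⁻¹ x s)`. -/
def interSpace (s : G) : Submodule ℂ (V →ₗ[ℂ] V) where
  carrier := {T | ∀ (x : G) (hx : x ∈ K) (hx' : s⁻¹ * x * s ∈ K),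
      T ∘ₗ (θ ⟨x, hx⟩).toLinearMap = (θ ⟨s⁻¹ * x * s, hx'⟩).toLinearMap ∘ₗ T}
  add_mem' := by
    intro a b ha hb x hx hx'
    simp only [LinearMap.add_comp, LinearMap.comp_add, ha x hx hx', hb x hx hx']
  zero_mem' := by
    intro x hx hx'
    simp
  smul_mem' := by
    intro c a ha x hx hx'
    simp only [LinearMap.smul_comp, LinearMap.comp_smul, ha x hx hx']

/-- `S` is a complete set of representatives of the double cosets `K\G/K`. -/
def IsDoubleCosetReps (S : Finset G) : Prop :=
  ∀ g : G, ∃! s : G, s ∈ S ∧ ∃ k₁ k₂ : K, g = (k₁ : G) * s * (k₂ : G)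

/-- The commutant `End_G(Ind_K^G V)`. -/
def commutant : Submodule ℂ (↥(ind K θ) →ₗ[ℂ] ↥(ind K θ)) where
  carrier := {T | ∀ (h : G) (f : ↥(ind K θ)), T (lamL K θ h f) = lamL K θ h (T f)}
  add_mem' := by
    intro a b ha hb h f
    simp [ha h f, hb h f]
  zero_mem' := by intro h f; simp
  smul_mem' := by
    intro c a ha h f
    simp [ha h f]

/-- The space `Hom_G(W, Ind_K^G V)` of `G`-equivariant linear maps from `(σ, W)` to the
induced representation. -/
def homGInd {W : Type} [AddCommGroup W] [Module ℂ W] (σ : G →* (W ≃ₗ[ℂ] W)) :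
    Submodule ℂ (W →ₗ[ℂ] (G → V)) where
  carrier := {A | (∀ w : W, A w ∈ ind K θ) ∧ ∀ (g : G) (w : W), A (σ g w) = translate g (A w)}
  add_mem' := by
    rintro A B ⟨hA₁, hA₂⟩ ⟨hB₁, hB₂⟩
    refine ⟨fun w => (ind K θ).add_mem (hA₁ w) (hB₁ w), fun g w => ?_⟩
    funext x
    simp [translate, hA₂ g w, hB₂ g w, Pi.add_apply]
  zero_mem' := by
    refine ⟨fun w => (ind K θ).zero_mem, fun g w => ?_⟩
    funext x
    simp [translate]
  smul_mem' := by
    rintro c A ⟨hA₁, hA₂⟩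
    refine ⟨fun w => (ind K θ).smul_mem c (hA₁ w), fun g w => ?_⟩
    funext x
    simp [translate, hA₂ g w]

/-- `Ind_K^G θ` is multiplicity-free: every irreducible representation of `G` occurs with
multiplicity at most `1`. -/
def IsMultFree : Prop :=
  ∀ (W : Type) [AddCommGroup W] [Module ℂ W] [FiniteDimensional ℂ W]
    (σ : G →* (W ≃ₗ[ℂ] W)), IsIrreducibleRep σ → Module.finrank ℂ ↥(homGInd K θ σ) ≤ 1

theorem convC_add_left (f₁ f₂ g : G → ℂ) : convC (f₁ + f₂) g = convC f₁ g + convC f₂ g := by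
  funext x
  simp [convC, add_mul, Finset.sum_add_distrib]

theorem convC_add_right (f g₁ g₂ : G → ℂ) : convC f (g₁ + g₂) = convC f g₁ + convC f g₂ := by
  funext x
  simp [convC, mul_add, Finset.sum_add_distrib]

theorem convC_smul_left (c : ℂ) (f g : G → ℂ) : convC (c • f) g = c • convC f g := by
  funext x
  simp [convC, Finset.mul_sum, mul_assoc]

theorem convC_smul_right (c : ℂ) (f g : G → ℂ) : convC f (c • g) = c • convC f g := by
  funext x
  simp [convC, Finset.mul_sum, mul_left_comm]

theorem convC_zero_left (g : G → ℂ) : convC 0 g = 0 := by funext x; simp [convC]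

theorem convC_zero_right (f : G → ℂ) : convC f 0 = 0 := by funext x; simp [convC]

/-- The Hecke algebra `H(G,K,ψ)` as a subspace of `L(G)`. -/
def heckeSub (v : V) : Submodule ℂ (G → ℂ) where
  carrier := HSet K θ v
  add_mem' := by
    intro a b ha hb
    have ha' : convC (convC (psi K θ v) a) (psi K θ v) = a := ha
    have hb' : convC (convC (psi K θ v) b) (psi K θ v) = b := hb
    show convC (convC (psi K θ v) (a + b)) (psi K θ v) = a + b
    rw [convC_add_right, convC_add_left, ha', hb']
  zero_mem' := by
    show convC (convC (psi K θ v) 0) (psi K θ v) = 0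
    rw [convC_zero_right, convC_zero_left]
  smul_mem' := by
    intro c a ha
    have ha' : convC (convC (psi K θ v) a) (psi K θ v) = a := ha
    show convC (convC (psi K θ v) (c • a)) (psi K θ v) = c • a
    rw [convC_smul_right, convC_smul_left, ha']

/-- The subspace `I(G,K,ψ) = {f ∈ L(G) : f * ψ = f}`. -/
def ISub (v : V) : Submodule ℂ (G → ℂ) where
  carrier := {φ | convC φ (psi K θ v) = φ}
  add_mem' := by
    intro a b ha hb
    have ha' : convC a (psi K θ v) = a := ha
    have hb' : convC b (psi K θ v) = b := hb
    show convC (a + b) (psi K θ v) = a + b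
    rw [convC_add_left, ha', hb']
  zero_mem' := by
    show convC 0 (psi K θ v) = 0
    rw [convC_zero_left]
  smul_mem' := by
    intro c a ha
    have ha' : convC a (psi K θ v) = a := ha
    show convC (c • a) (psi K θ v) = c • a
    rw [convC_smul_left, ha']

/-- The subspace of `L(G)` spanned by the left translates of `φ`. -/
def sphSpan (φ : G → ℂ) : Submodule ℂ (G → ℂ) :=
  Submodule.span ℂ (Set.range fun g : G => translate g φ)

/-- A submodule of functions on `G` invariant under all left translations. -/
def IsInvariantSub {A : Type} [AddCommGroup A] [Module ℂ A] (p : Submodule ℂ (G → A)) : Prop :=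
  ∀ h : G, ∀ f ∈ p, translate h f ∈ p

/-- `p` is an irreducible `G`-invariant subspace of the induced representation. -/
def IsIrredSubOfInd (p : Submodule ℂ (G → V)) : Prop :=
  p ≤ ind K θ ∧ IsInvariantSub p ∧ p ≠ ⊥ ∧
    ∀ q : Submodule ℂ (G → V), q ≤ p → IsInvariantSub q → q = ⊥ ∨ q = p

/-!
`ψ` is a self-adjoint idempotent, and by Schur orthogonality `F ↦ ⟨v, F(·)⟩` is a
`G`-isomorphism from `Ind_K^G V` onto the left ideal `I(G,K,ψ) = L(G) * ψ`. For an irreducible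
`W ≤ I(G,K,ψ)` the orthogonal projection `P_W` onto `W` commutes with left translations, so
`P_W f = f * t_W` on `I(G,K,ψ)`, where `t_W = P_W ψ ∈ H(G,K,ψ)` and `t_W(1) = ‖t_W‖² ≠ 0`.
Multiplicity-freeness makes every equivariant map `W → I(G,K,ψ)` a scalar on `W`. Hence right
convolution by `H(G,K,ψ)` is scalar on `W`, `t_W / t_W(1)` is spherical, `W ∩ H(G,K,ψ) = ℂ t_W`,
and distinct `W` are orthogonal. Conversely a spherical `φ` lies in any irreducible `W ≤ U_φ`,
so `U_φ = W` and `φ = t_W / t_W(1)`.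
-/

theorem translate_translate {A : Type} (h h' : G) (f : G → A) :
    translate h (translate h' f) = translate (h * h') f := by
  funext g; simp [translate, mul_assoc]

theorem translate_one {A : Type} (f : G → A) : translate (1 : G) f = f := by
  funext g; simp [translate]

theorem convC_assoc (a b c : G → ℂ) : convC (convC a b) c = convC a (convC b c) := by
  funext g
  simp only [convC, Finset.sum_mul, Finset.mul_sum]
  rw [Finset.sum_comm]
  refine Finset.sum_congr rfl fun x _ => ?_
  refine (Fintype.sum_bijective (x * ·) (Group.mulLeft_bijective x) _ _ fun y => ?_).symm
  simp [mul_assoc]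

theorem convC_eq_sum_translate (f u : G → ℂ) : convC f u = ∑ g : G, f g • translate g u := by
  funext x
  simp [convC, translate, Finset.sum_apply]

theorem translate_convC (h : G) (f u : G → ℂ) :
    convC (translate h f) u = translate h (convC f u) := by
  funext g
  refine (Fintype.sum_bijective (h * ·) (Group.mulLeft_bijective h) _ _ fun y => ?_).symm
  simp [translate, mul_assoc]

theorem single_one_convC (u : G → ℂ) : convC (Pi.single 1 1) u = u := by
  simp [convC_eq_sum_translate, Pi.single_apply, translate_one]

theorem starC_convC (a b : G → ℂ) : starC (convC a b) = convC (starC b) (starC a) := by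
  funext g
  simp only [starC, convC, map_sum, map_mul]
  refine Fintype.sum_bijective (g * ·) (Group.mulLeft_bijective g) _ _ fun y => ?_
  simp only [mul_inv_rev, inv_inv, inv_mul_cancel_left]
  ring

theorem convC_starC_one (a b : G → ℂ) : convC a (starC b) 1 = innerC a b := by
  simp [convC, starC, innerC]

theorem innerC_translate_translate (h : G) (a b : G → ℂ) :
    innerC (translate h a) (translate h b) = innerC a b :=
  (Fintype.sum_bijective (h * ·) (Group.mulLeft_bijective h) _ _ fun y => by
    simp [translate]).symm

theorem innerC_convC_right (a b u : G → ℂ) :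
    innerC a (convC b u) = innerC (convC a (starC u)) b := by
  simp only [innerC, convC, starC, Finset.sum_mul, map_sum, map_mul, Finset.mul_sum]
  rw [Finset.sum_comm]
  refine Finset.sum_congr rfl fun x _ => Finset.sum_congr rfl fun g _ => ?_
  rw [show (g⁻¹ * x)⁻¹ = x⁻¹ * g by group]
  ring

theorem innerC_smul_left (c : ℂ) (a b : G → ℂ) : innerC (c • a) b = c * innerC a b := by
  simp [innerC, Finset.mul_sum, mul_assoc]

theorem innerC_sub_right (a b c : G → ℂ) : innerC a (b - c) = innerC a b - innerC a c := by
  simp [innerC, mul_sub]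

theorem innerC_translate_right (h : G) (a b : G → ℂ) :
    innerC a (translate h b) = innerC (translate h⁻¹ a) b := by
  rw [← innerC_translate_translate h⁻¹, translate_translate, inv_mul_cancel, translate_one]

/-- Mathlib's inner product is conjugate-linear in the first variable, `innerC` in the second. -/
def toL2 : (G → ℂ) ≃ₗ[ℂ] EuclideanSpace ℂ G := (WithLp.linearEquiv 2 ℂ (G → ℂ)).symm

theorem inner_toL2 (a b : G → ℂ) : inner ℂ (toL2 a) (toL2 b) = innerC b a := by
  simp [toL2, PiLp.inner_apply, innerC]

theorem innerC_self_eq_zero {a : G → ℂ} : innerC a a = 0 ↔ a = 0 := by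
  rw [← inner_toL2, inner_self_eq_zero, LinearEquiv.map_eq_zero_iff]

def orthC (p : Submodule ℂ (G → ℂ)) : Submodule ℂ (G → ℂ) :=
  (p.map toL2.toLinearMap)ᗮ.comap toL2.toLinearMap

theorem mem_orthC {p : Submodule ℂ (G → ℂ)} {f : G → ℂ} :
    f ∈ orthC p ↔ ∀ u ∈ p, innerC u f = 0 := by
  simp only [orthC, Submodule.mem_comap, Submodule.mem_orthogonal', Submodule.mem_map,
    forall_exists_index, and_imp, forall_apply_eq_imp_iff₂, LinearEquiv.coe_coe, inner_toL2]

theorem eq_bot_of_le_orthC {p q : Submodule ℂ (G → ℂ)} (hp : q ≤ p) (hp' : q ≤ orthC p) :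
    q = ⊥ :=
  (Submodule.eq_bot_iff q).2 fun w hw => innerC_self_eq_zero.1 (mem_orthC.1 (hp' hw) w (hp hw))

theorem IsInvariantSub.orthC {p : Submodule ℂ (G → ℂ)} (hp : IsInvariantSub p) :
    IsInvariantSub (orthC p) := fun h f hf => mem_orthC.2 fun u hu => by
  rw [innerC_translate_right]
  exact mem_orthC.1 hf _ (hp h⁻¹ u hu)

def orthProj (W : Submodule ℂ (G → ℂ)) : (G → ℂ) →ₗ[ℂ] (G → ℂ) :=
  toL2.symm.toLinearMap ∘ₗ (W.map toL2.toLinearMap).starProjection.toLinearMap ∘ₗ toL2.toLinearMap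

theorem orthProj_mem (W : Submodule ℂ (G → ℂ)) (f : G → ℂ) : orthProj W f ∈ W := by
  obtain ⟨w, hw, hw'⟩ := (W.map toL2.toLinearMap).starProjection_apply_mem (toL2 f)
  simpa [orthProj, ← hw'] using hw

theorem sub_orthProj_mem_orthC (W : Submodule ℂ (G → ℂ)) (f : G → ℂ) :
    f - orthProj W f ∈ orthC W := by
  simp [orthC, orthProj]

theorem orthProj_eq {W : Submodule ℂ (G → ℂ)} {f w : G → ℂ} (hw : w ∈ W)
    (hfw : f - w ∈ orthC W) : orthProj W f = w := by
  have key : (W.map toL2.toLinearMap).starProjection (toL2 f) = toL2 w := by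
    refine Submodule.eq_starProjection_of_mem_of_inner_eq_zero (Submodule.mem_map_of_mem hw) ?_
    rintro _ ⟨u, hu, rfl⟩
    simpa [← map_sub, inner_toL2] using mem_orthC.1 hfw u hu
  simp [orthProj, key]

theorem orthProj_eq_self {W : Submodule ℂ (G → ℂ)} {f : G → ℂ} (hf : f ∈ W) :
    orthProj W f = f :=
  orthProj_eq hf (by simp)

theorem orthProj_translate {W : Submodule ℂ (G → ℂ)} (hW : IsInvariantSub W) (h : G)
    (f : G → ℂ) : orthProj W (translate h f) = translate h (orthProj W f) :=
  orthProj_eq (hW h _ (orthProj_mem W f)) (hW.orthC h _ (sub_orthProj_mem_orthC W f))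

theorem orthProj_convC {W : Submodule ℂ (G → ℂ)} (hW : IsInvariantSub W) (f u : G → ℂ) :
    orthProj W (convC f u) = convC f (orthProj W u) := by
  simp [convC_eq_sum_translate, orthProj_translate hW]

section Invariant

variable {A B : Type} [AddCommGroup A] [Module ℂ A] [AddCommGroup B] [Module ℂ B]

def IsMinimalInvariant (p : Submodule ℂ (G → A)) : Prop :=
  IsInvariantSub p ∧ p ≠ ⊥ ∧ ∀ q : Submodule ℂ (G → A), q ≤ p → IsInvariantSub q → q = ⊥ ∨ q = p

theorem isInvariantSub_sphSpan (φ : G → ℂ) : IsInvariantSub (sphSpan φ) := by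
  intro h f hf
  refine Submodule.span_induction ?_ ?_ (fun _ _ _ _ => Submodule.add_mem _)
    (fun c _ _ => Submodule.smul_mem _ c) hf
  · rintro _ ⟨g, rfl⟩
    exact Submodule.subset_span ⟨h * g, (translate_translate h g φ).symm⟩
  · exact Submodule.zero_mem _

theorem self_mem_sphSpan (φ : G → ℂ) : φ ∈ sphSpan φ :=
  Submodule.subset_span ⟨1, translate_one φ⟩

theorem sphSpan_le {φ : G → ℂ} {p : Submodule ℂ (G → ℂ)} (hp : IsInvariantSub p) (hφ : φ ∈ p) :
    sphSpan φ ≤ p :=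
  Submodule.span_le.2 <| Set.range_subset_iff.2 fun g => hp g φ hφ

theorem IsInvariantSub.inf {p q : Submodule ℂ (G → A)} (hp : IsInvariantSub p)
    (hq : IsInvariantSub q) : IsInvariantSub (p ⊓ q) :=
  fun h f hf => ⟨hp h f hf.1, hq h f hf.2⟩

theorem IsInvariantSub.iSup {ι : Type} {p : ι → Submodule ℂ (G → A)}
    (hp : ∀ i, IsInvariantSub (p i)) : IsInvariantSub (⨆ i, p i) := by
  intro h f hf
  exact Submodule.iSup_induction p (motive := fun f => translate h f ∈ ⨆ i, p i) hf
    (fun i f hf => Submodule.mem_iSup_of_mem i (hp i h f hf)) (Submodule.zero_mem _)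
    fun _ _ => Submodule.add_mem _

theorem exists_isMinimalInvariant_le [FiniteDimensional ℂ A] {p : Submodule ℂ (G → A)}
    (hp : IsInvariantSub p) (hp₀ : p ≠ ⊥) : ∃ W ≤ p, IsMinimalInvariant W := by
  obtain ⟨W, ⟨hWinv, hW₀, hWp⟩, hWmin⟩ := wellFounded_lt.has_min
    {q : Submodule ℂ (G → A) | IsInvariantSub q ∧ q ≠ ⊥ ∧ q ≤ p} ⟨p, hp, hp₀, le_rfl⟩
  refine ⟨W, hWp, hWinv, hW₀, fun q hqW hq => or_iff_not_imp_left.2 fun hq₀ => ?_⟩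
  by_contra hqW'
  exact hWmin q ⟨hq, hq₀, hqW.trans hWp⟩ (lt_of_le_of_ne hqW hqW')

theorem IsInvariantSub.map {f : (G → A) →ₗ[ℂ] (G → B)}
    (hf : ∀ h x, f (translate h x) = translate h (f x)) {p : Submodule ℂ (G → A)}
    (hp : IsInvariantSub p) : IsInvariantSub (p.map f) := by
  rintro h _ ⟨x, hx, rfl⟩
  exact ⟨translate h x, hp h x hx, hf h x⟩

theorem map_map_eq_of_leftInverseOn {M N : Type} [AddCommGroup M] [Module ℂ M]
    [AddCommGroup N] [Module ℂ N] {f : M →ₗ[ℂ] N} {g : N →ₗ[ℂ] M} {p : Submodule ℂ M}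
    (hgf : ∀ x ∈ p, g (f x) = x) : (p.map f).map g = p := by
  ext x
  refine ⟨?_, fun hx => ⟨f x, ⟨x, hx, rfl⟩, hgf x hx⟩⟩
  rintro ⟨_, ⟨y, hy, rfl⟩, rfl⟩
  rwa [hgf y hy]

end Invariant

section Transfer

variable {A B : Type} [AddCommGroup A] [Module ℂ A] [AddCommGroup B] [Module ℂ B]
  {f : (G → A) →ₗ[ℂ] (G → B)} {g : (G → B) →ₗ[ℂ] (G → A)}
  {P : Submodule ℂ (G → A)} {Q : Submodule ℂ (G → B)}

theorem IsMinimalInvariant.map (hf : ∀ h x, f (translate h x) = translate h (f x))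
    (hg : ∀ h y, g (translate h y) = translate h (g y)) (hfP : P.map f ≤ Q)
    (hgf : ∀ x ∈ P, g (f x) = x) (hfg : ∀ y ∈ Q, f (g y) = y) {p : Submodule ℂ (G → A)}
    (hpP : p ≤ P) (hp : IsMinimalInvariant p) : IsMinimalInvariant (p.map f) := by
  obtain ⟨hpinv, hp₀, hpmin⟩ := hp
  have hgfp : (p.map f).map g = p := map_map_eq_of_leftInverseOn fun x hx => hgf x (hpP hx)
  refine ⟨hpinv.map hf, fun h => hp₀ (by rw [← hgfp, h, Submodule.map_bot]), fun q hq hqinv => ?_⟩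
  have hfgq : (q.map g).map f = q :=
    map_map_eq_of_leftInverseOn fun y hy => hfg y (hfP (hq.trans (Submodule.map_mono hpP) hy))
  have hgq : q.map g ≤ p := hgfp ▸ Submodule.map_mono hq
  rcases hpmin _ hgq (hqinv.map hg) with h | h
  · left; rw [← hfgq, h, Submodule.map_bot]
  · right; rw [← hfgq, h]

def minimalInvariantEquiv (hf : ∀ h x, f (translate h x) = translate h (f x))
    (hg : ∀ h y, g (translate h y) = translate h (g y)) (hfP : P.map f ≤ Q)
    (hgQ : Q.map g ≤ P) (hgf : ∀ x ∈ P, g (f x) = x) (hfg : ∀ y ∈ Q, f (g y) = y) :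
    {p : Submodule ℂ (G → A) // p ≤ P ∧ IsMinimalInvariant p} ≃
      {q : Submodule ℂ (G → B) // q ≤ Q ∧ IsMinimalInvariant q} where
  toFun p := ⟨p.1.map f, (Submodule.map_mono p.2.1).trans hfP,
    p.2.2.map hf hg hfP hgf hfg p.2.1⟩
  invFun q := ⟨q.1.map g, (Submodule.map_mono q.2.1).trans hgQ,
    q.2.2.map hg hf hgQ hfg hgf q.2.1⟩
  left_inv p := Subtype.ext <| map_map_eq_of_leftInverseOn fun x hx => hgf x (p.2.1 hx)
  right_inv q := Subtype.ext <| map_map_eq_of_leftInverseOn fun y hy => hfg y (q.2.1 hy)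

end Transfer

def translateRep {A : Type} [AddCommGroup A] [Module ℂ A] {W : Submodule ℂ (G → A)}
    (hW : IsInvariantSub W) : G →* (W ≃ₗ[ℂ] W) where
  toFun g :=
    { toFun := fun f => ⟨translate g f, hW g f f.2⟩
      invFun := fun f => ⟨translate g⁻¹ f, hW g⁻¹ f f.2⟩
      map_add' _ _ := rfl
      map_smul' _ _ := rfl
      left_inv f := Subtype.ext <| by simp [translate_translate, translate_one]
      right_inv f := Subtype.ext <| by simp [translate_translate, translate_one] }
  map_one' := by ext f : 2; exact translate_one f.1
  map_mul' g h := by ext f : 2; exact (translate_translate g h f.1).symm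

theorem IsMinimalInvariant.isIrreducibleRep {A : Type} [AddCommGroup A] [Module ℂ A]
    {W : Submodule ℂ (G → A)} (hW : IsMinimalInvariant W) :
    IsIrreducibleRep (translateRep hW.1) := by
  obtain ⟨hWinv, hW₀, hWmin⟩ := hW
  have : Nontrivial W := Submodule.nontrivial_iff_ne_bot.2 hW₀
  refine ⟨bot_ne_top, fun p hp => ?_⟩
  have hpinv : IsInvariantSub (p.map W.subtype) := by
    rintro h _ ⟨y, hy, rfl⟩
    exact ⟨_, hp h y hy, rfl⟩
  rcases hWmin _ (Submodule.map_subtype_le W p) hpinv with h | h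
  · left; exact Submodule.map_injective_of_injective W.injective_subtype (by simpa using h)
  · right; exact Submodule.map_injective_of_injective W.injective_subtype (by simpa using h)

section Theta

variable {K : Subgroup G} {θ : K →* (V ≃ₗ[ℂ] V)}

theorem IsUnitaryRep.inner_inv_apply (hu : IsUnitaryRep θ) (k : K) (x y : V) :
    inner ℂ (θ k⁻¹ x) y = inner ℂ x (θ k y) := by
  rw [← hu k, map_inv, LinearEquiv.coe_inv, LinearEquiv.apply_symm_apply]

theorem IsUnitaryRep.norm_apply (hu : IsUnitaryRep θ) (k : K) (x : V) : ‖θ k x‖ = ‖x‖ := by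
  rw [norm_eq_sqrt_re_inner (𝕜 := ℂ), norm_eq_sqrt_re_inner (𝕜 := ℂ), hu]

theorem IsIrreducibleRep.nontrivial (hirr : IsIrreducibleRep θ) : Nontrivial V :=
  not_subsingleton_iff_nontrivial.1 fun _ => hirr.1 (Subsingleton.elim _ _)

theorem IsIrreducibleRep.exists_eq_smul (hirr : IsIrreducibleRep θ) (T : V →ₗ[ℂ] V)
    (hT : ∀ k x, T (θ k x) = θ k (T x)) : ∃ c : ℂ, ∀ x, T x = c • x := by
  have := hirr.nontrivial
  obtain ⟨c, hc⟩ := Module.End.exists_eigenvalue T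
  refine ⟨c, fun x => ?_⟩
  have htop := (hirr.2 (Module.End.eigenspace T c) fun k x hx => ?_).resolve_left hc
  · exact Module.End.mem_eigenspace_iff.1 (htop ▸ Submodule.mem_top)
  · rw [Module.End.mem_eigenspace_iff] at hx ⊢
    rw [hT, hx, map_smul]

/-- Schur orthogonality: averaging the rank-one projections onto the `θ k v` gives a
`K`-equivariant operator, hence a scalar, which the trace identifies. -/
theorem sum_inner_smul_theta (hu : IsUnitaryRep θ) (hirr : IsIrreducibleRep θ) {v : V}
    (hv : ‖v‖ = 1) (x : V) :
    ∑ k : K, inner ℂ (θ k v) x • θ k v = ((Nat.card K : ℂ) / Module.finrank ℂ V) • x := by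
  set B : V →ₗ[ℂ] V := ∑ k : K, (InnerProductSpace.rankOne ℂ (θ k v) (θ k v)).toLinearMap
  have hB : ∀ y, B y = ∑ k : K, inner ℂ (θ k v) y • θ k v := fun y => by simp [B]
  obtain ⟨c, hc⟩ := hirr.exists_eq_smul B fun j y => by
    simp only [hB, map_sum, map_smul]
    refine (Fintype.sum_bijective (j * ·) (Group.mulLeft_bijective j) _ _ fun k => ?_).symm
    rw [map_mul, LinearEquiv.mul_apply, hu]
  have htrace : (Nat.card K : ℂ) = c * Module.finrank ℂ V := by
    have : B = c • LinearMap.id := LinearMap.ext fun y => by simp [hc]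
    have h1 := congrArg (LinearMap.trace ℂ V) this
    simpa [B, InnerProductSpace.trace_rankOne, hu.norm_apply, hv] using h1
  have := hirr.nontrivial
  rw [← hB, hc, htrace, mul_div_cancel_right₀ _ (by simp [Module.finrank_pos.ne'])]

end Theta

theorem sum_eq_sum_subgroup {M : Type} [AddCommMonoid M] {K : Subgroup G} (F : G → M)
    (hF : ∀ g ∉ K, F g = 0) : ∑ g, F g = ∑ k : K, F k := by
  rw [← Fintype.sum_subtype_add_sum_subtype (· ∈ K) F,
    Fintype.sum_eq_zero (fun g : {g // g ∉ K} => F g) fun g => hF g g.2, add_zero]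

section Psi

variable {K : Subgroup G} {θ : K →* (V ≃ₗ[ℂ] V)} {v : V}

theorem psi_coe (k : K) :
    psi K θ v k = (Module.finrank ℂ V / Nat.card K : ℂ) * inner ℂ (θ k v) v :=
  dif_pos k.2

theorem psi_of_not_mem {g : G} (hg : g ∉ K) : psi K θ v g = 0 := dif_neg hg

theorem convC_psi_apply (f : G → ℂ) (g : G) :
    convC f (psi K θ v) g = ∑ k : K, f (g * k) * psi K θ v (k : G)⁻¹ := by
  rw [← sum_eq_sum_subgroup (fun j => f (g * j) * psi K θ v j⁻¹) fun j hj => by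
    rw [psi_of_not_mem (by simpa using hj), mul_zero]]
  exact (Fintype.sum_bijective (g * ·) (Group.mulLeft_bijective g) _ _ fun j => by simp).symm

theorem starC_psi (hu : IsUnitaryRep θ) : starC (psi K θ v) = psi K θ v := by
  funext g
  by_cases hg : g ∈ K
  · lift g to K using hg
    rw [starC, ← Subgroup.coe_inv, psi_coe, psi_coe, map_mul, hu.inner_inv_apply, inner_conj_symm]
    simp
  · rw [starC, psi_of_not_mem hg, psi_of_not_mem (by simpa using hg), map_zero]

def indToL (v : V) : (G → V) →ₗ[ℂ] (G → ℂ) where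
  toFun F g := inner ℂ v (F g)
  map_add' _ _ := funext fun _ => inner_add_right _ _ _
  map_smul' _ _ := funext fun _ => inner_smul_right _ _ _

variable (K θ v) in
/-- The inverse of `indToL v : Ind_K^G V → I(G,K,ψ)`. -/
def lToInd : (G → ℂ) →ₗ[ℂ] (G → V) where
  toFun f g := (Module.finrank ℂ V / Nat.card K : ℂ) • ∑ k : K, f (g * k) • θ k v
  map_add' _ _ := funext fun _ => by simp [add_smul, Finset.sum_add_distrib]
  map_smul' _ _ := funext fun _ => by simp [Finset.smul_sum, smul_smul, mul_left_comm]

theorem indToL_translate (h : G) (F : G → V) :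
    indToL v (translate h F) = translate h (indToL v F) := rfl

theorem lToInd_translate (h : G) (f : G → ℂ) :
    lToInd K θ v (translate h f) = translate h (lToInd K θ v f) := by
  funext g
  simp [lToInd, translate, mul_assoc]

theorem lToInd_mem_ind (f : G → ℂ) : lToInd K θ v f ∈ ind K θ := by
  intro g k₀
  simp only [lToInd, LinearMap.coe_mk, AddHom.coe_mk, map_smul, map_sum]
  congr 1
  refine (Fintype.sum_bijective (k₀⁻¹ * ·) (Group.mulLeft_bijective k₀⁻¹) _ _ fun k => ?_).symm
  simp [mul_assoc, map_mul]

theorem indToL_lToInd (hu : IsUnitaryRep θ) (f : G → ℂ) :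
    indToL v (lToInd K θ v f) = convC f (psi K θ v) := by
  funext g
  simp only [indToL, lToInd, LinearMap.coe_mk, AddHom.coe_mk, convC_psi_apply, inner_smul_right,
    inner_sum, Finset.mul_sum, ← Subgroup.coe_inv, psi_coe, hu.inner_inv_apply]
  exact Finset.sum_congr rfl fun k _ => mul_left_comm _ _ _

theorem lToInd_indToL (hu : IsUnitaryRep θ) (hirr : IsIrreducibleRep θ) (hv : ‖v‖ = 1)
    {F : G → V} (hF : F ∈ ind K θ) : lToInd K θ v (indToL v F) = F := by
  funext g
  have := hirr.nontrivial
  have hsum : ∑ k : K, inner ℂ v (F (g * k)) • θ k v = ∑ k : K, inner ℂ (θ k v) (F g) • θ k v := by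
    refine Finset.sum_congr rfl fun k _ => ?_
    rw [hF g k, ← hu.inner_inv_apply, inv_inv]
  simp only [lToInd, indToL, LinearMap.coe_mk, AddHom.coe_mk, hsum,
    sum_inner_smul_theta hu hirr hv, smul_smul]
  rw [div_mul_div_cancel₀, div_self, one_smul] <;> simp [Module.finrank_pos.ne']

end Psi

def convRight (f : G → ℂ) : (G → ℂ) →ₗ[ℂ] (G → ℂ) where
  toFun w := convC w f
  map_add' _ _ := convC_add_left _ _ _
  map_smul' _ _ := convC_smul_left _ _ _

theorem convC_sub_left (a b f : G → ℂ) : convC (a - b) f = convC a f - convC b f :=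
  (convRight f).map_sub a b

section Hecke

variable {K : Subgroup G} {θ : K →* (V ≃ₗ[ℂ] V)} {v : V}

theorem mem_ISub_iff {f : G → ℂ} : f ∈ ISub K θ v ↔ convC f (psi K θ v) = f := Iff.rfl

theorem isInvariantSub_ISub : IsInvariantSub (ISub K θ v) := fun h f hf => by
  rw [mem_ISub_iff, translate_convC, mem_ISub_iff.1 hf]

theorem convC_mem_ISub (a : G → ℂ) {b : G → ℂ} (hb : b ∈ ISub K θ v) : convC a b ∈ ISub K θ v := by
  rw [mem_ISub_iff, convC_assoc, mem_ISub_iff.1 hb]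

theorem indToL_mem_ISub (hu : IsUnitaryRep θ) (hirr : IsIrreducibleRep θ) (hv : ‖v‖ = 1)
    {F : G → V} (hF : F ∈ ind K θ) : indToL v F ∈ ISub K θ v := by
  rw [mem_ISub_iff, ← indToL_lToInd hu, lToInd_indToL hu hirr hv hF]

theorem psi_convC_psi (hu : IsUnitaryRep θ) (hirr : IsIrreducibleRep θ) (hv : ‖v‖ = 1) :
    convC (psi K θ v) (psi K θ v) = psi K θ v := by
  -- `(· * ψ) = indToL ∘ lToInd` is idempotent because `lToInd ∘ indToL = id` on `Ind_K^G V`.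
  have h : ∀ f, convC (convC f (psi K θ v)) (psi K θ v) = convC f (psi K θ v) := fun f => by
    rw [← indToL_lToInd hu, ← indToL_lToInd hu, lToInd_indToL hu hirr hv (lToInd_mem_ind f)]
  simpa [single_one_convC] using h (Pi.single 1 1)

theorem mem_HSet_iff (hu : IsUnitaryRep θ) (hirr : IsIrreducibleRep θ) (hv : ‖v‖ = 1)
    {f : G → ℂ} : f ∈ HSet K θ v ↔ convC (psi K θ v) f = f ∧ f ∈ ISub K θ v := by
  have hψ := psi_convC_psi hu hirr hv
  refine ⟨fun hf => ⟨?_, ?_⟩, fun ⟨h₁, h₂⟩ => ?_⟩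
  · rw [← hf.out, ← convC_assoc, ← convC_assoc, hψ]
  · rw [mem_ISub_iff, ← hf.out, convC_assoc _ (psi K θ v), hψ]
  · show convC (convC _ _) _ = f
    rw [h₁, h₂]

theorem starC_mem_HSet (hu : IsUnitaryRep θ) (hirr : IsIrreducibleRep θ) (hv : ‖v‖ = 1)
    {f : G → ℂ} (hf : f ∈ HSet K θ v) : starC f ∈ HSet K θ v := by
  obtain ⟨h₁, h₂⟩ := (mem_HSet_iff hu hirr hv).1 hf
  refine (mem_HSet_iff hu hirr hv).2 ⟨?_, ?_⟩
  · rw [← starC_psi hu, ← starC_convC, h₂]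
  · rw [mem_ISub_iff, ← starC_psi hu, ← starC_convC, h₁]

def minimalInvariantISubEquiv (hu : IsUnitaryRep θ) (hirr : IsIrreducibleRep θ) (hv : ‖v‖ = 1) :
    {W : Submodule ℂ (G → ℂ) // W ≤ ISub K θ v ∧ IsMinimalInvariant W} ≃
      {p : Submodule ℂ (G → V) // p ≤ ind K θ ∧ IsMinimalInvariant p} :=
  minimalInvariantEquiv lToInd_translate indToL_translate
    (Submodule.map_le_iff_le_comap.2 fun f _ => lToInd_mem_ind f)
    (Submodule.map_le_iff_le_comap.2 fun _ hF => indToL_mem_ISub hu hirr hv hF)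
    (fun f hf => (indToL_lToInd hu f).trans hf) (fun _ hF => lToInd_indToL hu hirr hv hF)

/-- Composing with `lToInd` embeds the equivariant maps `W → I(G,K,ψ)` into
`Hom_G(W, Ind_K^G V)`, which has dimension at most one and contains the inclusion. -/
theorem exists_eq_smul_of_commute_translate (hu : IsUnitaryRep θ) (hmf : IsMultFree K θ)
    {W : Submodule ℂ (G → ℂ)} (hWI : W ≤ ISub K θ v) (hW : IsMinimalInvariant W)
    (A : (G → ℂ) →ₗ[ℂ] (G → ℂ))
    (hA : ∀ h f, A (translate h f) = translate h (A f)) (hAI : ∀ w ∈ W, A w ∈ ISub K θ v) :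
    ∃ c : ℂ, ∀ w ∈ W, A w = c • w := by
  have hmem : ∀ B : (G → ℂ) →ₗ[ℂ] (G → ℂ), (∀ h f, B (translate h f) = translate h (B f)) →
      lToInd K θ v ∘ₗ B ∘ₗ W.subtype ∈ homGInd K θ (translateRep hW.1) := fun B hB =>
    ⟨fun w => lToInd_mem_ind _, fun g w => (congrArg _ (hB g w)).trans (lToInd_translate g _)⟩
  set ι : homGInd K θ (translateRep hW.1) := ⟨_, hmem LinearMap.id fun _ _ => rfl⟩
  have hι : ι ≠ 0 := by
    obtain ⟨w, hw, hw₀⟩ := Submodule.exists_mem_ne_zero_of_ne_bot hW.2.1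
    intro h
    apply hw₀
    have := congrArg (fun B : homGInd K θ (translateRep hW.1) => indToL v (B.1 ⟨w, hw⟩)) h
    simpa [ι, indToL_lToInd hu, mem_ISub_iff.1 (hWI hw)] using this
  have hrank : Module.finrank ℂ (homGInd K θ (translateRep hW.1)) = 1 :=
    le_antisymm (hmf _ _ hW.isIrreducibleRep)
      (Nat.one_le_iff_ne_zero.2 (Module.finrank_pos_iff_exists_ne_zero.2 ⟨ι, hι⟩).ne')
  obtain ⟨c, hc⟩ := exists_smul_eq_of_finrank_eq_one hrank hι
    (⟨_, hmem A hA⟩ : homGInd K θ (translateRep hW.1))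
  refine ⟨c, fun w hw => ?_⟩
  have := congrArg (fun B : homGInd K θ (translateRep hW.1) => indToL v (B.1 ⟨w, hw⟩)) hc
  simpa [ι, indToL_lToInd hu, mem_ISub_iff.1 (hWI hw), mem_ISub_iff.1 (hAI w hw)] using this.symm

end Hecke

section Zonal

variable {K : Subgroup G} {θ : K →* (V ≃ₗ[ℂ] V)} {v : V} {W : Submodule ℂ (G → ℂ)}

variable (K θ v) in
def zonal (W : Submodule ℂ (G → ℂ)) : G → ℂ := orthProj W (psi K θ v)

variable (K θ v) in
def sphericalOf (W : Submodule ℂ (G → ℂ)) : G → ℂ := (zonal K θ v W 1)⁻¹ • zonal K θ v W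

variable (K θ v W) in
theorem zonal_mem : zonal K θ v W ∈ W := orthProj_mem W _

theorem orthProj_eq_convC_zonal (hW : IsInvariantSub W) {f : G → ℂ} (hf : f ∈ ISub K θ v) :
    orthProj W f = convC f (zonal K θ v W) := by
  conv_lhs => rw [← mem_ISub_iff.1 hf]
  exact orthProj_convC hW f _

theorem zonal_mem_HSet (hu : IsUnitaryRep θ) (hirr : IsIrreducibleRep θ) (hv : ‖v‖ = 1)
    (hWI : W ≤ ISub K θ v) (hW : IsInvariantSub W) : zonal K θ v W ∈ HSet K θ v :=
  (mem_HSet_iff hu hirr hv).2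
    ⟨by rw [zonal, ← orthProj_convC hW, psi_convC_psi hu hirr hv], hWI (zonal_mem K θ v W)⟩

theorem zonal_ne_zero (hWI : W ≤ ISub K θ v) (hW : IsMinimalInvariant W) : zonal K θ v W ≠ 0 := by
  intro h
  refine hW.2.1 ((Submodule.eq_bot_iff W).2 fun w hw => ?_)
  rw [← orthProj_eq_self hw, orthProj_eq_convC_zonal hW.1 (hWI hw), h, convC_zero_right]

theorem zonal_one (hu : IsUnitaryRep θ) (hWI : W ≤ ISub K θ v) :
    zonal K θ v W 1 = innerC (zonal K θ v W) (zonal K θ v W) := by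
  set t := zonal K θ v W
  have horth := mem_orthC.1 (sub_orthProj_mem_orthC W (psi K θ v)) t (zonal_mem K θ v W)
  rw [innerC_sub_right, sub_eq_zero] at horth
  calc t 1 = convC t (starC (psi K θ v)) 1 := by
        rw [starC_psi hu, mem_ISub_iff.1 (hWI (zonal_mem K θ v W))]
    _ = innerC t t := by rw [convC_starC_one, horth]; rfl

theorem exists_convC_eq_smul (hu : IsUnitaryRep θ) (hirr : IsIrreducibleRep θ) (hv : ‖v‖ = 1)
    (hmf : IsMultFree K θ) (hWI : W ≤ ISub K θ v) (hW : IsMinimalInvariant W) {f : G → ℂ}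
    (hf : f ∈ HSet K θ v) : ∃ c : ℂ, ∀ w ∈ W, convC w f = c • w :=
  exists_eq_smul_of_commute_translate hu hmf hWI hW (convRight f)
    (fun h w => translate_convC h w f)
    fun _ _ => convC_mem_ISub _ ((mem_HSet_iff hu hirr hv).1 hf).2

theorem isSpherical_sphericalOf (hu : IsUnitaryRep θ) (hirr : IsIrreducibleRep θ)
    (hv : ‖v‖ = 1) (hmf : IsMultFree K θ) (hWI : W ≤ ISub K θ v) (hW : IsMinimalInvariant W) :
    IsSpherical K θ v (sphericalOf K θ v W) := by
  have hone : zonal K θ v W 1 ≠ 0 := by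
    rw [zonal_one hu hWI, Ne, innerC_self_eq_zero]
    exact zonal_ne_zero hWI hW
  refine ⟨(heckeSub K θ v).smul_mem _ (zonal_mem_HSet hu hirr hv hWI hW.1), ?_, fun f hf => ?_⟩
  · simp [sphericalOf, hone]
  · obtain ⟨c, hc⟩ := exists_convC_eq_smul hu hirr hv hmf hWI hW hf
    exact ⟨c, by rw [sphericalOf, convC_smul_left, hc _ (zonal_mem K θ v W), smul_comm]⟩

theorem sphSpan_sphericalOf (hu : IsUnitaryRep θ) (hirr : IsIrreducibleRep θ) (hv : ‖v‖ = 1)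
    (hmf : IsMultFree K θ) (hWI : W ≤ ISub K θ v) (hW : IsMinimalInvariant W) :
    sphSpan (sphericalOf K θ v W) = W := by
  have hle := sphSpan_le (φ := sphericalOf K θ v W) hW.1 (W.smul_mem _ (zonal_mem K θ v W))
  refine (hW.2.2 _ hle (isInvariantSub_sphSpan _)).resolve_left fun h => ?_
  have h₀ := self_mem_sphSpan (sphericalOf K θ v W)
  rw [h, Submodule.mem_bot] at h₀
  simpa [h₀] using (isSpherical_sphericalOf hu hirr hv hmf hWI hW).2.1

/-- Right convolution by an element of `H(G,K,ψ)` commutes with the projection onto `W`: it is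
a scalar on `W` and, its adjoint being right convolution by `f*`, it preserves `orthC W`. -/
theorem orthProj_convC_right (hu : IsUnitaryRep θ) (hirr : IsIrreducibleRep θ) (hv : ‖v‖ = 1)
    (hmf : IsMultFree K θ) (hWI : W ≤ ISub K θ v) (hW : IsMinimalInvariant W) {f : G → ℂ}
    (hf : f ∈ HSet K θ v) (x : G → ℂ) : orthProj W (convC x f) = convC (orthProj W x) f := by
  obtain ⟨c, hc⟩ := exists_convC_eq_smul hu hirr hv hmf hWI hW hf
  obtain ⟨c', hc'⟩ := exists_convC_eq_smul hu hirr hv hmf hWI hW (starC_mem_HSet hu hirr hv hf)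
  refine orthProj_eq (by rw [hc _ (orthProj_mem W x)]; exact W.smul_mem _ (orthProj_mem W x)) ?_
  refine mem_orthC.2 fun u hu => ?_
  rw [← convC_sub_left, innerC_convC_right, hc' u hu, innerC_smul_left,
    mem_orthC.1 (sub_orthProj_mem_orthC W x) u hu, mul_zero]

theorem eq_smul_zonal_of_mem_HSet (hu : IsUnitaryRep θ) (hirr : IsIrreducibleRep θ)
    (hv : ‖v‖ = 1) (hmf : IsMultFree K θ) (hWI : W ≤ ISub K θ v) (hW : IsMinimalInvariant W)
    {φ : G → ℂ} (hφW : φ ∈ W) (hφ : φ ∈ HSet K θ v) : ∃ c : ℂ, φ = c • zonal K θ v W := by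
  obtain ⟨c, hc⟩ := exists_convC_eq_smul hu hirr hv hmf hWI hW hφ
  refine ⟨c, ?_⟩
  calc φ = orthProj W (convC (psi K θ v) φ) := by
        rw [((mem_HSet_iff hu hirr hv).1 hφ).1, orthProj_eq_self hφW]
    _ = c • zonal K θ v W := by
        rw [orthProj_convC_right hu hirr hv hmf hWI hW hφ, ← zonal, hc _ (zonal_mem K θ v W)]

end Zonal

section Spherical

variable {K : Subgroup G} {θ : K →* (V ≃ₗ[ℂ] V)} {v : V}

/-- `orthProj W φ = φ * zonal W` is a multiple of `φ`, and not zero, for then the translates of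
`φ`, hence `W`, would be orthogonal to `W`. -/
theorem IsSpherical.mem_of_le_sphSpan (hu : IsUnitaryRep θ) (hirr : IsIrreducibleRep θ)
    (hv : ‖v‖ = 1) {φ : G → ℂ} (hφ : IsSpherical K θ v φ) {W : Submodule ℂ (G → ℂ)}
    (hWI : W ≤ ISub K θ v) (hW : IsMinimalInvariant W) (hWφ : W ≤ sphSpan φ) : φ ∈ W := by
  have hφI := ((mem_HSet_iff hu hirr hv).1 hφ.1).2
  obtain ⟨c, hc⟩ := hφ.2.2 _ (zonal_mem_HSet hu hirr hv hWI hW.1)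
  rw [← orthProj_eq_convC_zonal hW.1 hφI] at hc
  by_cases hc₀ : c = 0
  · refine absurd (eq_bot_of_le_orthC le_rfl (hWφ.trans (sphSpan_le hW.1.orthC ?_))) hW.2.1
    simpa [hc, hc₀] using sub_orthProj_mem_orthC W φ
  · rw [← inv_smul_smul₀ hc₀ φ, ← hc]
    exact W.smul_mem _ (orthProj_mem W φ)

theorem IsSpherical.sphSpan_le_ISub (hu : IsUnitaryRep θ) (hirr : IsIrreducibleRep θ)
    (hv : ‖v‖ = 1) {φ : G → ℂ} (hφ : IsSpherical K θ v φ) : sphSpan φ ≤ ISub K θ v :=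
  sphSpan_le isInvariantSub_ISub ((mem_HSet_iff hu hirr hv).1 hφ.1).2

theorem IsSpherical.isMinimalInvariant_sphSpan (hu : IsUnitaryRep θ) (hirr : IsIrreducibleRep θ)
    (hv : ‖v‖ = 1) {φ : G → ℂ} (hφ : IsSpherical K θ v φ) :
    IsMinimalInvariant (sphSpan φ) := by
  have hU₀ : sphSpan φ ≠ ⊥ := fun h => by
    have hφ₀ : φ = 0 := by simpa [h] using self_mem_sphSpan φ
    simpa [hφ₀] using hφ.2.1
  obtain ⟨W, hWU, hW⟩ := exists_isMinimalInvariant_le (isInvariantSub_sphSpan φ) hU₀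
  have hWI := hWU.trans (hφ.sphSpan_le_ISub hu hirr hv)
  rwa [le_antisymm hWU (sphSpan_le hW.1 (hφ.mem_of_le_sphSpan hu hirr hv hWI hW hWU))] at hW

theorem IsSpherical.sphericalOf_sphSpan (hu : IsUnitaryRep θ) (hirr : IsIrreducibleRep θ)
    (hv : ‖v‖ = 1) (hmf : IsMultFree K θ) {φ : G → ℂ} (hφ : IsSpherical K θ v φ) :
    sphericalOf K θ v (sphSpan φ) = φ := by
  have hWI := hφ.sphSpan_le_ISub hu hirr hv
  have hW := hφ.isMinimalInvariant_sphSpan hu hirr hv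
  obtain ⟨c, hc⟩ :=
    eq_smul_zonal_of_mem_HSet hu hirr hv hmf hWI hW (self_mem_sphSpan φ) hφ.1
  have hc1 : c * zonal K θ v (sphSpan φ) 1 = 1 := by
    simpa [hφ.2.1] using (congrFun hc 1).symm
  rw [sphericalOf, ← eq_inv_of_mul_eq_one_left hc1, ← hc]

/-- The projection onto `W` is a scalar on `W'`. -/
theorem le_orthC_of_ne (hu : IsUnitaryRep θ) (hmf : IsMultFree K θ) {W W' : Submodule ℂ (G → ℂ)}
    (hWI : W ≤ ISub K θ v) (hW : IsMinimalInvariant W) (hW'I : W' ≤ ISub K θ v)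
    (hW' : IsMinimalInvariant W') (hne : W ≠ W') : W' ≤ orthC W := by
  obtain ⟨c, hc⟩ := exists_eq_smul_of_commute_translate hu hmf hW'I hW' (orthProj W)
    (orthProj_translate hW.1) fun w _ => hWI (orthProj_mem W w)
  by_cases hc₀ : c = 0
  · intro w hw
    simpa [hc w hw, hc₀] using sub_orthProj_mem_orthC W w
  · refine absurd ((hW.2.2 W' (fun w hw => ?_) hW'.1).resolve_left hW'.2.1) (Ne.symm hne)
    rw [← inv_smul_smul₀ hc₀ w, ← hc w hw]
    exact W.smul_mem _ (orthProj_mem W w)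

theorem ISub_eq_iSup_sphSpan (hu : IsUnitaryRep θ) (hirr : IsIrreducibleRep θ) (hv : ‖v‖ = 1)
    (hmf : IsMultFree K θ) :
    ISub K θ v = ⨆ φ : {φ : G → ℂ // IsSpherical K θ v φ}, sphSpan (φ : G → ℂ) := by
  set R := ⨆ φ : {φ : G → ℂ // IsSpherical K θ v φ}, sphSpan (φ : G → ℂ)
  have hRI : R ≤ ISub K θ v := iSup_le fun φ => φ.2.sphSpan_le_ISub hu hirr hv
  have hC : ISub K θ v ⊓ orthC R = ⊥ := by
    by_contra hne
    have hR : IsInvariantSub R := IsInvariantSub.iSup fun φ => isInvariantSub_sphSpan _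
    obtain ⟨W, hWC, hW⟩ :=
      exists_isMinimalInvariant_le (isInvariantSub_ISub.inf hR.orthC) hne
    have hWI : W ≤ ISub K θ v := hWC.trans inf_le_left
    refine hW.2.1 (eq_bot_of_le_orthC ?_ (hWC.trans inf_le_right))
    rw [← sphSpan_sphericalOf hu hirr hv hmf hWI hW]
    exact le_iSup (fun φ : {φ // IsSpherical K θ v φ} => sphSpan (φ : G → ℂ))
      ⟨_, isSpherical_sphericalOf hu hirr hv hmf hWI hW⟩
  refine le_antisymm (fun f hf => ?_) hRI
  have hperp : f - orthProj R f ∈ ISub K θ v ⊓ orthC R :=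
    ⟨sub_mem hf (hRI (orthProj_mem R f)), sub_orthProj_mem_orthC R f⟩
  rw [hC, Submodule.mem_bot, sub_eq_zero] at hperp
  exact hperp ▸ orthProj_mem R f

def sphericalEquiv (hu : IsUnitaryRep θ) (hirr : IsIrreducibleRep θ) (hv : ‖v‖ = 1)
    (hmf : IsMultFree K θ) :
    {φ : G → ℂ // IsSpherical K θ v φ} ≃
      {W : Submodule ℂ (G → ℂ) // W ≤ ISub K θ v ∧ IsMinimalInvariant W} where
  toFun φ :=
    ⟨sphSpan φ.1, φ.2.sphSpan_le_ISub hu hirr hv, φ.2.isMinimalInvariant_sphSpan hu hirr hv⟩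
  invFun W := ⟨sphericalOf K θ v W.1, isSpherical_sphericalOf hu hirr hv hmf W.2.1 W.2.2⟩
  left_inv φ := Subtype.ext (φ.2.sphericalOf_sphSpan hu hirr hv hmf)
  right_inv W := Subtype.ext (sphSpan_sphericalOf hu hirr hv hmf W.2.1 W.2.2)

end Spherical

/-- Let `(G,K,θ)` be a multiplicity-free triple.  For every spherical
function `φ`, the span `U_φ` of the `G`-translates of `φ` is an irreducible `G`-invariant
subspace of `L(G)`, the subspaces `U_φ` for distinct spherical functions are mutually
orthogonal, and `I(G,K,ψ) = ⊕_φ U_φ` is the decomposition of `I(G,K,ψ)` into irreducible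
subrepresentations.  In particular the number of spherical functions equals the number of
pairwise inequivalent irreducible `G`-representations contained in `Ind_K^G θ` (equivalently,
the number of irreducible `G`-invariant subspaces of `Ind_K^G V`). -/
theorem statement9 (K : Subgroup G) (θ : ↥K →* (V ≃ₗ[ℂ] V))
    (hu : IsUnitaryRep θ) (hirr : IsIrreducibleRep θ) (v : V) (hv : ‖v‖ = 1)
    (hmf : IsMultFree K θ) :
    -- each U_φ is an irreducible invariant subspace of I(G,K,ψ)
    (∀ φ : G → ℂ, IsSpherical K θ v φ →
      sphSpan φ ≤ ISub K θ v ∧ IsInvariantSub (sphSpan φ) ∧ sphSpan φ ≠ ⊥ ∧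
        (∀ q : Submodule ℂ (G → ℂ), q ≤ sphSpan φ → IsInvariantSub q →
          q = ⊥ ∨ q = sphSpan φ)) ∧
    -- the U_φ are mutually orthogonal
    (∀ φ μ : G → ℂ, IsSpherical K θ v φ → IsSpherical K θ v μ → φ ≠ μ →
      ∀ f ∈ sphSpan φ, ∀ f' ∈ sphSpan μ, innerC f f' = 0) ∧
    -- I(G,K,ψ) is the (orthogonal) direct sum of the U_φ
    (ISub K θ v = ⨆ φ : {φ : G → ℂ // IsSpherical K θ v φ}, sphSpan (φ : G → ℂ)) ∧
    -- the number of spherical functions equals |J|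
    Nat.card {φ : G → ℂ // IsSpherical K θ v φ} =
      Nat.card {p : Submodule ℂ (G → V) // IsIrredSubOfInd K θ p} := by
  refine ⟨fun φ hφ => ⟨hφ.sphSpan_le_ISub hu hirr hv, hφ.isMinimalInvariant_sphSpan hu hirr hv⟩,
    fun φ μ hφ hμ hφμ f hf f' hf' => ?_, ISub_eq_iSup_sphSpan hu hirr hv hmf,
    Nat.card_congr ((sphericalEquiv hu hirr hv hmf).trans (minimalInvariantISubEquiv hu hirr hv))⟩
  have hne : sphSpan φ ≠ sphSpan μ := fun h => hφμ <| by
    rw [← hφ.sphericalOf_sphSpan hu hirr hv hmf, ← hμ.sphericalOf_sphSpan hu hirr hv hmf, h]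
  exact mem_orthC.1 (le_orthC_of_ne hu hmf (hφ.sphSpan_le_ISub hu hirr hv)
    (hφ.isMinimalInvariant_sphSpan hu hirr hv) (hμ.sphSpan_le_ISub hu hirr hv)
    (hμ.isMinimalInvariant_sphSpan hu hirr hv) hne hf') f hf

end MFT
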